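/- Let u : ℝ → ℝ be C¹ and 1-periodic with mean μ₀ = ∫₀¹ u dx and μ₁² = ∫₀¹ (u')² dx. Then the sup norm of u over [0,1] is at most |μ₀| + (√3/6) μ₁. -/

import Mathlib

/-!
Integrating by parts against the centred sawtooth `y - 1/2` on one period gives
`u x - μ₀ = ∫₀¹ (y - 1/2) u'(x + y) dy`; the boundary terms combine to `u x` by periodicity.
Cauchy–Schwarz then bounds this by `(∫₀¹ (y - 1/2)²)^{1/2} μ₁ = μ₁ / √12 = (√3/6) μ₁`.
-/

open intervalIntegral

lemma periodic_deriv {𝕜 F : Type*} [NontriviallyNormedField 𝕜] [NormedAddCommGroup F]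
    [NormedSpace 𝕜 F] {f : 𝕜 → F} {c : 𝕜} (h : Function.Periodic f c) :
    Function.Periodic (deriv f) c := fun x => by
  rw [← deriv_comp_add_const, show (fun y => f (y + c)) = f from funext h]

lemma Function.Periodic.intervalIntegral_comp_const_add {f : ℝ → ℝ} {T : ℝ}
    (h : Function.Periodic f T) (x : ℝ) :
    ∫ y in (0:ℝ)..T, f (x + y) = ∫ y in (0:ℝ)..T, f y := by
  rw [integral_comp_add_left f x]
  simpa using h.intervalIntegral_add_eq x 0

lemma intervalIntegral_mul_sq_le {f g : ℝ → ℝ} {a b : ℝ} (hab : a ≤ b)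
    (hf : Continuous f) (hg : Continuous g) :
    (∫ y in a..b, f y * g y) ^ 2 ≤ (∫ y in a..b, f y ^ 2) * ∫ y in a..b, g y ^ 2 := by
  have hquad : ∀ t : ℝ, 0 ≤ (∫ y in a..b, f y ^ 2) * (t * t)
      + (2 * ∫ y in a..b, f y * g y) * t + ∫ y in a..b, g y ^ 2 := by
    intro t
    have hexpand : ∫ y in a..b, (t * f y + g y) ^ 2 = (∫ y in a..b, f y ^ 2) * (t * t)
        + (2 * ∫ y in a..b, f y * g y) * t + ∫ y in a..b, g y ^ 2 := by
      have hpt : ∀ y, (t * f y + g y) ^ 2 = t * t * f y ^ 2 + 2 * t * (f y * g y) + g y ^ 2 :=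
        fun y => by ring
      simp_rw [hpt]
      rw [integral_add, integral_add, integral_const_mul, integral_const_mul]
      · ring
      all_goals exact (by fun_prop : Continuous _).intervalIntegrable _ _
    rw [← hexpand]
    exact integral_nonneg hab fun y _ => sq_nonneg _
  have hdiscr := discrim_le_zero hquad
  rw [discrim] at hdiscr
  nlinarith

lemma integral_sub_half_sq (T : ℝ) : ∫ y in (0:ℝ)..T, (y - T / 2) ^ 2 = T ^ 3 / 12 := by
  rw [integral_comp_sub_right (fun y => y ^ 2), integral_pow]
  ring

lemma Function.Periodic.integral_sub_half_mul_deriv_comp_add {u : ℝ → ℝ} {T : ℝ}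
    (hu : ContDiff ℝ 1 u) (hper : Function.Periodic u T) (x : ℝ) :
    ∫ y in (0:ℝ)..T, (y - T / 2) * deriv u (x + y) = T * u x - ∫ y in (0:ℝ)..T, u y := by
  have hderiv : ∀ y, HasDerivAt (fun y => u (x + y)) (deriv u (x + y)) y := fun y =>
    ((hu.differentiable one_ne_zero).differentiableAt.hasDerivAt).comp_const_add x y
  have hibp := integral_mul_deriv_eq_deriv_mul (fun y _ => (hasDerivAt_id' y).sub_const (T / 2))
    (fun y _ => hderiv y) (continuous_const.intervalIntegrable 0 T)
    (((hu.continuous_deriv le_rfl).comp (continuous_const_add x)).intervalIntegrable 0 T)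
  simp only [one_mul] at hibp
  rw [hibp, hper.intervalIntegral_comp_const_add, add_zero, hper x]
  ring

lemma Function.Periodic.sq_mul_sub_integral_le {u : ℝ → ℝ} {T : ℝ} (hT : 0 ≤ T)
    (hu : ContDiff ℝ 1 u) (hper : Function.Periodic u T) (x : ℝ) :
    (T * u x - ∫ y in (0:ℝ)..T, u y) ^ 2 ≤ T ^ 3 / 12 * ∫ y in (0:ℝ)..T, deriv u y ^ 2 := by
  have hderiv_sq : Function.Periodic (fun y => deriv u y ^ 2) T :=
    (periodic_deriv hper).comp (· ^ 2)
  calc (T * u x - ∫ y in (0:ℝ)..T, u y) ^ 2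
      = (∫ y in (0:ℝ)..T, (y - T / 2) * deriv u (x + y)) ^ 2 := by
        rw [hper.integral_sub_half_mul_deriv_comp_add hu]
    _ ≤ (∫ y in (0:ℝ)..T, (y - T / 2) ^ 2) * ∫ y in (0:ℝ)..T, deriv u (x + y) ^ 2 :=
        intervalIntegral_mul_sq_le hT (by fun_prop)
          ((hu.continuous_deriv le_rfl).comp (continuous_const_add x))
    _ = T ^ 3 / 12 * ∫ y in (0:ℝ)..T, deriv u y ^ 2 := by
        rw [integral_sub_half_sq, hderiv_sq.intervalIntegral_comp_const_add x]

theorem sup_norm_le_mean_add_deriv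
    (u : ℝ → ℝ) (hu : ContDiff ℝ 1 u) (hper : Function.Periodic u 1)
    (μ₀ μ₁ : ℝ) (hμ₀ : μ₀ = ∫ x in (0:ℝ)..1, u x)
    (hμ₁ : μ₁ = Real.sqrt (∫ x in (0:ℝ)..1, (deriv u x) ^ 2)) :
    ∀ x ∈ Set.Icc (0:ℝ) 1, |u x| ≤ |μ₀| + (Real.sqrt 3 / 6) * μ₁ := by
  intro x _
  have hμ₁_sq : μ₁ ^ 2 = ∫ y in (0:ℝ)..1, deriv u y ^ 2 :=
    hμ₁ ▸ Real.sq_sqrt (integral_nonneg zero_le_one fun y _ => sq_nonneg _)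
  have hμ₁_nonneg : 0 ≤ μ₁ := hμ₁ ▸ Real.sqrt_nonneg _
  have hsqrt3 : Real.sqrt 3 ^ 2 = 3 := Real.sq_sqrt (by norm_num)
  have hdev : |u x - μ₀| ≤ Real.sqrt 3 / 6 * μ₁ := by
    refine abs_le_of_sq_le_sq ?_ (by positivity)
    have hbound := hper.sq_mul_sub_integral_le zero_le_one hu x
    rw [one_mul, one_pow, ← hμ₀, ← hμ₁_sq] at hbound
    rw [mul_pow, div_pow, hsqrt3]
    linarith
  calc |u x| = |μ₀ + (u x - μ₀)| := by rw [add_sub_cancel]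
    _ ≤ |μ₀| + |u x - μ₀| := abs_add_le _ _
    _ ≤ |μ₀| + Real.sqrt 3 / 6 * μ₁ := by gcongr
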